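/- arXiv:2004.05378 — 3 statements merged into one kernel-verified Lean document; each statement's English description precedes it below -/
import Mathlib

section
/- Let Δ : State → Row → State be such that Δ s r = Δ (Δ s r) r for all s, r (idempotence on repeated rows). It does NOT follow in general that List.foldl Δ s Q = List.foldl Δ s Q.dedup for arbitrary Q; however, if additionally Δ is commutative (Δ (Δ s r₁) r₂ = Δ (Δ s r₂) r₁ for all s, r₁, r₂), then for any list Q over a decidable-equality Row type, List.foldl Δ s Q = List.foldl Δ s Q.dedup. -/
private lemma foldl_mem_absorb {State Row : Type*}
    (Δ : State → Row → State)
    (hidem : ∀ s r, Δ s r = Δ (Δ s r) r)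
    (hcomm : ∀ s r₁ r₂, Δ (Δ s r₁) r₂ = Δ (Δ s r₂) r₁)
    (r : Row) : ∀ (Q : List Row) (s : State), r ∈ Q →
    List.foldl Δ (Δ s r) Q = List.foldl Δ s Q := by
  intro Q
  induction Q with
  | nil => intro s h; simp at h
  | cons a t ih =>
    intro s h
    rcases List.mem_cons.mp h with rfl | hm
    · simp only [List.foldl_cons]
      rw [hcomm, ← hidem]
    · simp only [List.foldl_cons]
      rw [hcomm, ih _ hm]

theorem duplicate_insensitive {State Row : Type*} [DecidableEq Row]
    (Δ : State → Row → State)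
    (hidem : ∀ s r, Δ s r = Δ (Δ s r) r)
    (hcomm : ∀ s r₁ r₂, Δ (Δ s r₁) r₂ = Δ (Δ s r₂) r₁)
    (s : State) (Q : List Row) :
    List.foldl Δ s Q = List.foldl Δ s Q.dedup := by
  induction Q generalizing s with
  | nil => simp
  | cons a t ih =>
    by_cases h : a ∈ t
    · rw [List.dedup_cons_of_mem h, List.foldl_cons,
        foldl_mem_absorb Δ hidem hcomm a t s h, ih]
    · rw [List.dedup_cons_of_notMem h, List.foldl_cons, List.foldl_cons, ih]
end

section
/- With the same setup as the minimum-cost-supplier loop, if the final first component m' = fst (List.foldl body (M₀, n₀) L) satisfies m' < M₀, then there exists a pair (c, n) in L with c = m', c > lb, and (m', snd (List.foldl body (M₀, n₀) L)) = (c, n) for some occurrence (c, n) ∈ L; in particular the returned name is the name of some supplier in L whose cost equals the final minimum and exceeds lb. -/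
/-- Loop body of the minimum-cost-supplier cursor loop. -/
noncomputable def mcsBody (lb : ℝ) (st : ℝ × String) (row : ℝ × String) : ℝ × String :=
  if row.1 > lb ∧ row.1 < st.1 then row else st

lemma mcs_aux (lb : ℝ) : ∀ (L : List (ℝ × String)) (st : ℝ × String),
    List.foldl (mcsBody lb) st L = st ∨
      (List.foldl (mcsBody lb) st L ∈ L ∧ (List.foldl (mcsBody lb) st L).1 > lb) := by
  intro L
  induction L with
  | nil => intro st; left; rfl
  | cons a t ih =>
    intro st
    simp only [List.foldl_cons]
    rcases ih (mcsBody lb st a) with h | h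
    · rw [h]
      unfold mcsBody
      split
      · right; exact ⟨List.mem_cons_self, by tauto⟩
      · left; rfl
    · right; exact ⟨List.mem_cons_of_mem _ h.1, h.2⟩

theorem mcs_argmin_correct (lb M₀ : ℝ) (n₀ : String) (L : List (ℝ × String))
    (h : (List.foldl (mcsBody lb) (M₀, n₀) L).1 < M₀) :
    ∃ c n, (c, n) ∈ L ∧ c = (List.foldl (mcsBody lb) (M₀, n₀) L).1 ∧ c > lb ∧
      ((List.foldl (mcsBody lb) (M₀, n₀) L).1,
        (List.foldl (mcsBody lb) (M₀, n₀) L).2) = (c, n) := by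
  rcases mcs_aux lb L (M₀, n₀) with heq | ⟨hm, hgt⟩
  · rw [heq] at h; exact absurd h (lt_irrefl _)
  · exact ⟨_, _, hm, rfl, hgt, rfl⟩
end

section
/- Let Δ : State → Row → State, and let sortKey : Row → K with K a linear order. Let sortBy be a stable sort of lists by sortKey. If Q' is any list with the same multiset of elements as Q and Q' is sorted by sortKey, and Δ is 'order-insensitive within equal keys', meaning Δ (Δ s r₁) r₂ = Δ (Δ s r₂) r₁ whenever sortKey r₁ = sortKey r₂, then List.foldl Δ s₀ Q' is the same for all such sorted permutations Q' of Q. -/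
private lemma foldl_erase_min {State Row K : Type*} [LinearOrder K] [DecidableEq Row]
    (Δ : State → Row → State) (sortKey : Row → K)
    (h : ∀ s r₁ r₂, sortKey r₁ = sortKey r₂ → Δ (Δ s r₁) r₂ = Δ (Δ s r₂) r₁) :
    ∀ (l : List Row) (s : State) (a : Row), a ∈ l →
      l.Pairwise (fun a b => sortKey a ≤ sortKey b) →
      (∀ b ∈ l, sortKey a ≤ sortKey b) →
      List.foldl Δ s l = List.foldl Δ (Δ s a) (l.erase a) := by
  intro l
  induction l with
  | nil => intro s a ha; simp at ha
  | cons b t ih =>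
    intro s a ha hsort hmin
    by_cases hab : b = a
    · subst hab; simp
    · have hat : a ∈ t := by
        rcases List.mem_cons.mp ha with h' | h'
        · exact absurd h'.symm hab
        · exact h'
      have hba : sortKey b ≤ sortKey a := (List.pairwise_cons.mp hsort).1 a hat
      have hkey : sortKey a = sortKey b :=
        le_antisymm (hmin b (List.mem_cons_self)) hba
      rw [List.erase_cons_tail (by simpa using hab)]
      simp only [List.foldl_cons]
      rw [ih (Δ s b) a hat (List.pairwise_cons.mp hsort).2
          (fun c hc => hmin c (List.mem_cons_of_mem _ hc)),
        h s a b hkey]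

theorem foldl_sorted_perm_unique {State Row K : Type*} [LinearOrder K]
    (Δ : State → Row → State) (sortKey : Row → K)
    (h : ∀ s r₁ r₂, sortKey r₁ = sortKey r₂ → Δ (Δ s r₁) r₂ = Δ (Δ s r₂) r₁)
    (s₀ : State) (Q Q' Q'' : List Row)
    (h1 : Q'.Perm Q) (h2 : Q''.Perm Q)
    (hs1 : Q'.Pairwise (fun a b => sortKey a ≤ sortKey b))
    (hs2 : Q''.Pairwise (fun a b => sortKey a ≤ sortKey b)) :
    List.foldl Δ s₀ Q' = List.foldl Δ s₀ Q'' := by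
  classical
  have hp : Q'.Perm Q'' := h1.trans h2.symm
  clear h1 h2
  induction Q' generalizing Q'' s₀ with
  | nil => rw [hp.nil_eq]
  | cons a t ih =>
    have ha : a ∈ Q'' := hp.mem_iff.mp (List.mem_cons_self)
    have hmin : ∀ b ∈ Q'', sortKey a ≤ sortKey b := by
      intro b hb
      rcases List.mem_cons.mp (hp.symm.mem_iff.mp hb) with h' | h'
      · exact le_of_eq (congrArg sortKey h'.symm)
      · exact (List.pairwise_cons.mp hs1).1 b h'
    rw [foldl_erase_min Δ sortKey h Q'' s₀ a ha hs2 hmin]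
    simp only [List.foldl_cons]
    apply ih <;> first
      | exact (hp.trans (List.perm_cons_erase ha)).cons_inv
      | exact (List.pairwise_cons.mp hs1).2
      | exact hs2.sublist (List.erase_sublist)
end
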